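/- For any compact Hausdorff space X and any infinite cardinal c = 2^ω (the continuum), t₀(X) = t₀(X^c): the functional tightness of X equals the functional tightness of the power X^𝔠. -/

import Mathlib

/-!
X is a retract of X^ι, so t₀(X) ≤ t₀(X^ι). Conversely, let t₀(X) ≤ κ and let f be κ-continuous
on X^ι; as κ ≥ ℵ₀, f is continuous on countable sets. For two compact factors, separate
continuity together with continuity on countable sets gives continuity (a diagonal sequence and
a cluster point of it), so by induction f is continuous on every finite face: the maps
z ↦ f(z on E, p off E), E finite, are continuous. Since |ι| ≤ 𝔠, the Cantor cube 2^ι is separable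
(Hewitt–Marczewski–Pondiczery), so A ↦ f(z on A, p off A) is continuous on 2^ι and
f(z on E, p off E) → f(z) as E grows. If f were discontinuous at p, these two facts produce
finite sets E₀ ⊆ E₁ ⊆ ⋯ and points yₙ supported on Eₙ with f(yₙ) far from f(p) but
f(yₙ on E_m, p off E_m) → f(p) for each m. At a cluster point y of (yₙ), continuity on the
countable set {y on E_m} ∪ {y} forces f(y) = f(p), contradicting continuity on {yₙ} ∪ {y}.
-/

open Cardinal Set

/-- The functional tightness of a space: the least infinite cardinal κ such that
every κ-continuous real-valued function is continuous. -/
noncomputable def functionalTightness (X : Type u) [TopologicalSpace X] : Cardinal.{u} :=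
  sInf {κ : Cardinal.{u} | Cardinal.aleph0 ≤ κ ∧
    ∀ f : X → ℝ,
      (∀ A : Set X, #A ≤ κ → Continuous (A.restrict f)) → Continuous f}

universe u

open Filter Topology TopologicalSpace Function

theorem exists_seq_forall_image_range {α : Type*} [DecidableEq α] (P : ℕ → Finset α → α → Prop)
    (h : ∀ n s, ∃ a, P n s a) : ∃ u : ℕ → α, ∀ n, P n ((Finset.range n).image u) (u n) := by
  choose g hg using h
  let s : ℕ → Finset α := fun n => Nat.rec ∅ (fun k t => insert (g k t) t) n
  have hs : ∀ n, s n = (Finset.range n).image fun k => g k (s k) := by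
    intro n
    induction n with
    | zero => rfl
    | succ n ih => rw [Finset.range_add_one, Finset.image_insert, ← ih]
  exact ⟨fun n => g n (s n), fun n => hs n ▸ hg n (s n)⟩

theorem tendsto_of_eventually_dist_lt_one_div {γ : Type*} [PseudoMetricSpace γ] {u : ℕ → γ}
    {a : γ} (h : ∀ᶠ n in atTop, dist (u n) a < 1 / ((n : ℝ) + 1)) : Tendsto u atTop (𝓝 a) :=
  tendsto_iff_dist_tendsto_zero.2 <| squeeze_zero' (Eventually.of_forall fun _ => dist_nonneg)
    (h.mono fun _ => le_of_lt) tendsto_one_div_add_atTop_nhds_zero_nat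

section ClusterPt

variable {Y β : Type*} [TopologicalSpace Y] {F : Filter β}

theorem exists_frequently_le_dist_of_not_continuousAt {γ : Type*} [PseudoMetricSpace γ]
    {f : Y → γ} {y : Y} (h : ¬ContinuousAt f y) : ∃ ε > 0, ∃ᶠ z in 𝓝 y, ε ≤ dist (f z) (f y) := by
  simpa only [ContinuousAt, Metric.tendsto_nhds, not_forall, not_eventually, not_lt, exists_prop]
    using h

theorem not_mapClusterPt_of_forall_le_dist {γ : Type*} [PseudoMetricSpace γ] {u : β → γ} {a : γ}
    {ε : ℝ} (hε : 0 < ε) (h : ∀ b, ε ≤ dist (u b) a) : ¬MapClusterPt a F u := fun ha =>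
  let ⟨b, hb⟩ := (ha.frequently (Metric.ball_mem_nhds a hε)).exists
  (h b).not_gt hb

theorem MapClusterPt.eq_of_tendsto [T2Space Y] {u : β → Y} {x y : Y} (hx : MapClusterPt x F u)
    (hy : Tendsto u F (𝓝 y)) : x = y :=
  eq_of_nhds_neBot (hx.neBot.mono (inf_le_inf_left _ hy))

theorem MapClusterPt.comp_of_continuousOn_countable {γ : Type*} [TopologicalSpace γ]
    [Countable β] {f : Y → γ} {u : β → Y} {x : Y} (hf : ∀ S : Set Y, S.Countable → ContinuousOn f S)
    (hx : MapClusterPt x F u) : MapClusterPt (f x) F (f ∘ u) :=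
  hx.tendsto_comp' <| (hf _ ((countable_range u).insert x) x (mem_insert x _)).mono_left <|
    inf_le_inf_left _ <| le_principal_iff.2 <| mem_map.2 <|
      univ_mem' fun b => mem_insert_of_mem _ (mem_range_self b)

theorem continuous_of_continuousOn_countable {γ : Type*} [TopologicalSpace γ] [T3Space γ]
    [SeparableSpace Y] {f : Y → γ} (hf : ∀ S : Set Y, S.Countable → ContinuousOn f S) :
    Continuous f := by
  obtain ⟨D, hDc, hD⟩ := exists_countable_dense Y
  have hlim : ∀ y, Tendsto f (𝓝[D] y) (𝓝 (f y)) := fun y =>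
    (hf _ (hDc.insert y) y (mem_insert y D)).mono_left (nhdsWithin_mono y (subset_insert y D))
  have hext : extendFrom D f = f := funext fun y => extendFrom_eq (hD y) (hlim y)
  exact hext ▸ continuous_extendFrom hD fun y => ⟨f y, hlim y⟩

end ClusterPt

section SeparatelyContinuous

variable {Y Z γ : Type*} [TopologicalSpace Y] [TopologicalSpace Z] [CompactSpace Y]
  [CompactSpace Z]

theorem mapClusterPt_of_tendsto_prod [TopologicalSpace γ] [T2Space γ] {f : Y × Z → γ}
    (hf : ∀ S : Set (Y × Z), S.Countable → ContinuousOn f S)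
    (h₂ : ∀ y, Continuous fun z => f (y, z)) {a : Y} {b : Z} {c : ℕ → Y × Z}
    (hb : Tendsto (fun n => f (a, (c n).2)) atTop (𝓝 (f (a, b))))
    (ha : ∀ m, Tendsto (fun n => f ((c n).1, (c m).2)) atTop (𝓝 (f (a, (c m).2)))) :
    MapClusterPt (f (a, b)) atTop (f ∘ c) := by
  obtain ⟨⟨y, z⟩, -, hyz⟩ := isCompact_univ.exists_mapClusterPt (f := atTop) (u := c) (by simp)
  have hy : ∀ m, f (y, (c m).2) = f (a, (c m).2) := fun m =>
    ((hyz.continuousAt_comp (continuous_fst.prodMk continuous_const).continuousAt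
      (f := fun w : Y × Z => (w.1, (c m).2))).comp_of_continuousOn_countable hf).eq_of_tendsto
      (ha m)
  have hz : f (y, z) = f (a, b) :=
    (hyz.continuousAt_comp ((h₂ y).comp continuous_snd).continuousAt).eq_of_tendsto <| by
      simpa only [comp_def, hy] using hb
  exact hz ▸ hyz.comp_of_continuousOn_countable hf

theorem continuous_of_separately_of_continuousOn_countable [MetricSpace γ] {f : Y × Z → γ}
    (hf : ∀ S : Set (Y × Z), S.Countable → ContinuousOn f S)
    (h₁ : ∀ z, Continuous fun y => f (y, z)) (h₂ : ∀ y, Continuous fun z => f (y, z)) :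
    Continuous f := by
  classical
  refine continuous_iff_continuousAt.2 fun ⟨a, b⟩ => by_contra fun hab => ?_
  obtain ⟨ε, hε, hbad⟩ := exists_frequently_le_dist_of_not_continuousAt hab
  obtain ⟨c, hc⟩ := exists_seq_forall_image_range (fun n (s : Finset (Y × Z)) w =>
    ε ≤ dist (f w) (f (a, b)) ∧ dist (f (a, w.2)) (f (a, b)) < 1 / (n + 1) ∧
      ∀ q ∈ s, dist (f (w.1, q.2)) (f (a, q.2)) < 1 / (n + 1)) fun n s => by
    have hδ : (0 : ℝ) < 1 / (n + 1) := by positivity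
    have hU : ∀ᶠ y in 𝓝 a, ∀ q ∈ s, dist (f (y, q.2)) (f (a, q.2)) < 1 / (n + 1) :=
      (eventually_all_finset s).2 fun q _ => Metric.tendsto_nhds.1 (h₁ q.2).continuousAt _ hδ
    have hV := Metric.tendsto_nhds.1 ((h₂ a).continuousAt (x := b)) _ hδ
    obtain ⟨w, hwε, hw⟩ := (hbad.and_eventually (hU.prod_nhds hV)).exists
    exact ⟨w, hwε, hw.2, hw.1⟩
  refine not_mapClusterPt_of_forall_le_dist hε (fun n => (hc n).1) <|
    mapClusterPt_of_tendsto_prod hf h₂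
      (tendsto_of_eventually_dist_lt_one_div (Eventually.of_forall fun n => (hc n).2.1))
      fun m => tendsto_of_eventually_dist_lt_one_div <| (eventually_gt_atTop m).mono fun n hn =>
        (hc n).2.2 _ (Finset.mem_image_of_mem c (Finset.mem_range.2 hn))

end SeparatelyContinuous

section FunctionalTightness

variable {X Y : Type u} [TopologicalSpace X] [TopologicalSpace Y] {κ : Cardinal.{u}}

def KappaContinuous (κ : Cardinal.{u}) (f : X → ℝ) : Prop :=
  ∀ A : Set X, #A ≤ κ → Continuous (A.domRestrict f)

/-- For `ℵ₀ ≤ κ`, this is `t₀(X) ≤ κ`. -/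
def FunctionallyTight (X : Type u) [TopologicalSpace X] (κ : Cardinal.{u}) : Prop :=
  ∀ f : X → ℝ, KappaContinuous κ f → Continuous f

theorem KappaContinuous.comp {f : Y → ℝ} (hf : KappaContinuous κ f) {g : X → Y}
    (hg : Continuous g) : KappaContinuous κ (f ∘ g) := fun _ hA =>
  (hf _ (mk_image_le.trans hA)).comp <|
    (hg.comp continuous_subtype_val).subtype_mk fun a => mem_image_of_mem g a.2

theorem KappaContinuous.continuousOn_of_countable {f : X → ℝ} (hf : KappaContinuous κ f)
    (hκ : ℵ₀ ≤ κ) {S : Set X} (hS : S.Countable) : ContinuousOn f S :=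
  continuousOn_iff_continuous_domRestrict.2 <| hf S <| (mk_le_aleph0_iff.2 hS.to_subtype).trans hκ

theorem FunctionallyTight.of_leftInverse (hY : FunctionallyTight Y κ) {r : Y → X} {s : X → Y}
    (hr : Continuous r) (hs : Continuous s) (hrs : LeftInverse r s) : FunctionallyTight X κ :=
  fun f hf => by simpa only [comp_assoc, hrs.comp_eq_id, comp_id] using (hY _ (hf.comp hr)).comp hs

theorem FunctionallyTight.of_homeomorph (hX : FunctionallyTight X κ) (e : X ≃ₜ Y) :
    FunctionallyTight Y κ :=
  hX.of_leftInverse e.continuous e.symm.continuous e.apply_symm_apply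

theorem FunctionallyTight.of_pi {ι : Type u} [Nonempty ι] (h : FunctionallyTight (ι → X) κ) :
    FunctionallyTight X κ :=
  h.of_leftInverse (continuous_apply (Classical.arbitrary ι)) (continuous_pi fun _ => continuous_id)
    fun _ => rfl

variable [CompactSpace X] [CompactSpace Y]

theorem FunctionallyTight.prod (hX : FunctionallyTight X κ) (hY : FunctionallyTight Y κ)
    (hκ : ℵ₀ ≤ κ) : FunctionallyTight (X × Y) κ := fun _ hf =>
  continuous_of_separately_of_continuousOn_countable
    (fun _ hS => hf.continuousOn_of_countable hκ hS)
    (fun _ => hX _ (hf.comp (continuous_id.prodMk continuous_const)))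
    (fun _ => hY _ (hf.comp (continuous_const.prodMk continuous_id)))

theorem FunctionallyTight.pi_of_finite (hX : FunctionallyTight X κ) (hκ : ℵ₀ ≤ κ) (ι : Type u)
    [Finite ι] : FunctionallyTight (ι → X) κ := by
  induction ι using Finite.induction_empty_option with
  | of_equiv e h => exact h.of_homeomorph (Homeomorph.piCongrLeft (Y := fun _ => X) e)
  | h_empty => exact fun f _ => continuous_of_const fun x y => congrArg f (Subsingleton.elim x y)
  | h_option h =>
    exact (h.prod (hX.of_homeomorph (Homeomorph.funUnique PUnit X).symm) hκ).of_homeomorph <|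
      Homeomorph.sumArrowHomeomorphProdArrow.symm.trans <|
        Homeomorph.piCongrLeft (Y := fun _ => X) (Equiv.optionEquivSumPUnit _).symm

end FunctionalTightness

section CantorCube

variable {ι : Type*}

theorem exists_injOn_fin_restrict {E : Type*} {e : ι → ℕ → E} (he : Injective e) {I : Set ι}
    (hI : I.Finite) : ∃ N, InjOn (fun i (k : Fin N) => e i k) I := by
  obtain ⟨M, hM⟩ := ((hI.prod hI).image fun q => PiNat.firstDiff (e q.1) (e q.2)).bddAbove
  refine ⟨M + 1, fun a ha b hb hab => he <| by_contra fun hne => PiNat.apply_firstDiff_ne hne ?_⟩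
  exact congrFun hab ⟨_, Nat.lt_succ_of_le (hM (mem_image_of_mem _ (mk_mem_prod ha hb)))⟩

theorem separableSpace_pi_bool_of_injective {e : ι → ℕ → Bool} (he : Injective e) :
    SeparableSpace (ι → Bool) := by
  let d : (Σ N : ℕ, (Fin N → Bool) → Bool) → ι → Bool := fun g i => g.2 fun k => e i k
  refine ⟨range d, countable_range d, fun x => mem_closure_iff_nhds.2 fun U hU => ?_⟩
  rw [nhds_pi, Filter.mem_pi] at hU
  obtain ⟨I, hI, t, ht, hIt⟩ := hU
  obtain ⟨N, hN⟩ := exists_injOn_fin_restrict he hI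
  let g := extend (I.domRestrict fun i (k : Fin N) => e i k) (I.domRestrict x) fun _ => false
  refine ⟨d ⟨N, g⟩, hIt fun i hi => ?_, mem_range_self _⟩
  have : d ⟨N, g⟩ i = x i := hN.injective.extend_apply (I.domRestrict x) (fun _ => false) ⟨i, hi⟩
  exact this ▸ mem_of_mem_nhds (ht i)

theorem separableSpace_pi_bool {ι : Type u} (hι : #ι ≤ 𝔠) : SeparableSpace (ι → Bool) := by
  obtain ⟨e⟩ : Nonempty (ι ↪ (ℕ → Bool)) := by
    rw [← lift_mk_le', mk_arrow, mk_bool, mk_nat]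
    simpa [two_power_aleph0] using hι
  exact separableSpace_pi_bool_of_injective e.injective

end CantorCube

section Piecewise

variable {X : Type u} [TopologicalSpace X] {ι : Type u} [DecidableEq ι] {p : ι → X}

theorem tendsto_piecewise_of_mapClusterPt {E : ℕ → Finset ι} (hE : Monotone E) {y : ℕ → ι → X}
    (hy : ∀ n, (E n).piecewise (y n) p = y n) {x : ι → X} (hx : MapClusterPt x atTop y) :
    Tendsto (fun m => (E m).piecewise x p) atTop (𝓝 x) := by
  refine tendsto_pi_nhds.2 fun i => ?_
  by_cases hi : ∃ n, i ∈ E n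
  · obtain ⟨n, hn⟩ := hi
    exact tendsto_const_nhds.congr' <| (eventually_ge_atTop n).mono fun m hm =>
      (Finset.piecewise_eq_of_mem _ _ _ (hE hm hn)).symm
  · simp only [not_exists] at hi
    have hyi : ∀ n, y n i = p i := fun n => by
      rw [← hy n, Finset.piecewise_eq_of_notMem _ _ _ (hi n)]
    have hxi : MapClusterPt (x i) atTop fun _ : ℕ => p i := by
      simpa only [comp_def, hyi] using
        hx.continuousAt_comp (continuous_apply i).continuousAt
    simp only [Finset.piecewise_eq_of_notMem _ _ _ (hi _)]
    intro s hs
    obtain ⟨_, h⟩ := (hxi.frequently hs).exists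
    exact mem_map.2 (univ_mem' fun _ => h)

theorem mapClusterPt_of_tendsto_piecewise [CompactSpace X] {γ : Type*} [TopologicalSpace γ]
    [T2Space γ] {f : (ι → X) → γ} (hf : ∀ S : Set (ι → X), S.Countable → ContinuousOn f S)
    (hcont : ∀ E : Finset ι, Continuous fun z => f (E.piecewise z p))
    {E : ℕ → Finset ι} (hE : Monotone E) {y : ℕ → ι → X} (hy : ∀ n, (E n).piecewise (y n) p = y n)
    (hlim : ∀ m, Tendsto (fun n => f ((E m).piecewise (y n) p)) atTop (𝓝 (f p))) :
    MapClusterPt (f p) atTop (f ∘ y) := by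
  obtain ⟨x, -, hx⟩ := isCompact_univ.exists_mapClusterPt (f := atTop) (u := y) (by simp)
  have hfix : ∀ m, f ((E m).piecewise x p) = f p := fun m =>
    (hx.continuousAt_comp (hcont (E m)).continuousAt).eq_of_tendsto (hlim m)
  have hfx : f x = f p :=
    ((tendsto_piecewise_of_mapClusterPt hE hy hx).mapClusterPt.comp_of_continuousOn_countable
      hf).eq_of_tendsto (by simpa only [comp_def, hfix] using tendsto_const_nhds)
  exact hfx ▸ hx.comp_of_continuousOn_countable hf

variable {κ : Cardinal.{u}} {f : (ι → X) → ℝ}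

theorem FunctionallyTight.continuous_comp_piecewise [CompactSpace X] (hX : FunctionallyTight X κ)
    (hκ : ℵ₀ ≤ κ) (hf : KappaContinuous κ f) (p : ι → X) (E : Finset ι) :
    Continuous fun z => f (E.piecewise z p) := by
  let ρ : (E → X) → ι → X := fun t i => if h : i ∈ E then t ⟨i, h⟩ else p i
  have hρ : Continuous ρ := continuous_pi fun i => by
    by_cases h : i ∈ E
    · simpa only [ρ, dif_pos h] using continuous_apply _
    · simpa only [ρ, dif_neg h] using continuous_const
  have hres : Continuous fun (z : ι → X) (i : E) => z i := continuous_pi fun i => continuous_apply _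
  exact (hX.pi_of_finite hκ E _ (hf.comp hρ)).comp hres

theorem KappaContinuous.tendsto_piecewise_atTop [SeparableSpace (ι → Bool)]
    (hf : KappaContinuous κ f) (hκ : ℵ₀ ≤ κ) (p z : ι → X) :
    Tendsto (fun E : Finset ι => f (E.piecewise z p)) atTop (𝓝 (f z)) := by
  let Ψ : (ι → Bool) → ι → X := fun A i => bif A i then z i else p i
  have hΨ : Continuous Ψ := continuous_pi fun i =>
    (continuous_of_discreteTopology (f := fun b : Bool => bif b then z i else p i)).comp
      (continuous_apply i)
  have hfΨ : Continuous (f ∘ Ψ) := continuous_of_continuousOn_countable fun _ hS =>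
    (hf.comp hΨ).continuousOn_of_countable hκ hS
  have hmem : Tendsto (fun (E : Finset ι) (i : ι) => decide (i ∈ E)) atTop (𝓝 fun _ => true) :=
    tendsto_pi_nhds.2 fun i => tendsto_const_nhds.congr' <|
      (eventually_ge_atTop {i}).mono fun E hE => by simp [Finset.singleton_subset_iff.1 hE]
  have hΨE : ∀ E : Finset ι, Ψ (fun i => decide (i ∈ E)) = E.piecewise z p := fun E => by
    ext i
    by_cases h : i ∈ E <;> simp [Ψ, h]
  have h := (hfΨ.tendsto _).comp hmem
  simp only [comp_def, hΨE] at h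
  exact h

end Piecewise

theorem FunctionallyTight.pi {X : Type u} [TopologicalSpace X] [CompactSpace X] {ι : Type u}
    [SeparableSpace (ι → Bool)] {κ : Cardinal.{u}} (hX : FunctionallyTight X κ) (hκ : ℵ₀ ≤ κ) :
    FunctionallyTight (ι → X) κ := by
  classical
  intro f hf
  refine continuous_iff_continuousAt.2 fun p => by_contra fun hp => ?_
  obtain ⟨ε, hε, hbad⟩ := exists_frequently_le_dist_of_not_continuousAt hp
  have hcont := hX.continuous_comp_piecewise hκ hf p
  obtain ⟨w, hw⟩ := exists_seq_forall_image_range (fun n (s : Finset (Finset ι × (ι → X))) w =>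
    ε / 2 ≤ dist (f (w.1.piecewise w.2 p)) (f p) ∧
      ∀ q ∈ s, q.1 ⊆ w.1 ∧ dist (f (q.1.piecewise w.2 p)) (f p) < 1 / (n + 1)) fun n s => by
    have hδ : (0 : ℝ) < 1 / (n + 1) := by positivity
    have hnear : ∀ᶠ z in 𝓝 p, ∀ q ∈ s, dist (f (q.1.piecewise z p)) (f p) < 1 / (n + 1) :=
      (eventually_all_finset s).2 fun q _ => by
        simpa only [Finset.piecewise_same] using
          Metric.tendsto_nhds.1 ((hcont q.1).continuousAt (x := p)) _ hδ
    obtain ⟨z, hzε, hz⟩ := (hbad.and_eventually hnear).exists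
    obtain ⟨E, hsE, hE⟩ := ((eventually_ge_atTop (s.sup Prod.fst)).and
      (Metric.tendsto_nhds.1 (hf.tendsto_piecewise_atTop hκ p z) _ (half_pos hε))).exists
    refine ⟨(E, z), ?_, fun q hq => ⟨(Finset.le_sup hq).trans hsE, hz q hq⟩⟩
    linarith [dist_triangle_left (f z) (f p) (f (E.piecewise z p))]
  have hprev : ∀ m n, m < n → (w m).1 ⊆ (w n).1 ∧
      dist (f ((w m).1.piecewise (w n).2 p)) (f p) < 1 / (n + 1) := fun m n hmn =>
    (hw n).2 _ (Finset.mem_image_of_mem w (Finset.mem_range.2 hmn))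
  have hmono : Monotone fun n => (w n).1 :=
    monotone_nat_of_le_succ fun n => (hprev n (n + 1) n.lt_succ_self).1
  refine not_mapClusterPt_of_forall_le_dist (half_pos hε) (fun n => (hw n).1) <|
    mapClusterPt_of_tendsto_piecewise (fun _ hS => hf.continuousOn_of_countable hκ hS) hcont hmono
      (fun _ => Finset.piecewise_idem_left _ _ _ _) fun m =>
        tendsto_of_eventually_dist_lt_one_div <| (eventually_gt_atTop m).mono fun n hmn => ?_
  rw [Finset.piecewise_piecewise_of_subset_left (hprev m n hmn).1]
  exact (hprev m n hmn).2

theorem functionalTightness_continuum_power_general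
    {X : Type u} [TopologicalSpace X] [CompactSpace X]
    {ι : Type u} (hι : #ι = 2 ^ Cardinal.aleph0) :
    functionalTightness X = functionalTightness (ι → X) := by
  have : SeparableSpace (ι → Bool) := separableSpace_pi_bool (hι.trans two_power_aleph0).le
  have : Nonempty ι := by
    rw [← mk_ne_zero_iff, hι]
    exact (power_pos _ two_pos).ne'
  exact congrArg sInf <| Set.ext fun κ =>
    and_congr_right fun hκ => ⟨fun hX => FunctionallyTight.pi hX hκ, FunctionallyTight.of_pi⟩

/-- For any compact Hausdorff space X, t₀(X) = t₀(X^𝔠), where 𝔠 = 2^ℵ₀. -/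
theorem functionalTightness_continuum_power
    {X : Type u} [TopologicalSpace X] [CompactSpace X] [T2Space X]
    {ι : Type u} (hι : #ι = 2 ^ Cardinal.aleph0) :
    functionalTightness X = functionalTightness (ι → X) :=
  functionalTightness_continuum_power_general hι
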